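/- Let Π be a logic program and A a total assignment solving Δ_Π. Then the set T_A ∩ atom(Π) is an answer set of Π if and only if no nonempty subset U of T_A ∩ atom(Π) is unfounded with respect to A (i.e., satisfies EB(U,Π) ⊆ F_A). -/
import Mathlib


/-- Signed literals over a domain `V`. -/
inductive Lit (V : Type) where
  | pos : V → Lit V
  | neg : V → Lit V
deriving DecidableEq

def Lit.var {V : Type} : Lit V → V
  | .pos v => v
  | .neg v => v

/-- A normal rule `head ← pos, not neg`. -/
structure Rule (V : Type) where
  head : V
  pos : Finset V
  neg : Finset V
deriving DecidableEq

variable {V : Type} [DecidableEq V]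

/-- A body, identified with its pair of positive and negative atom sets. -/
abbrev Body (V : Type) := Finset V × Finset V

/-- The domain `atom(Prog) ∪ body(Prog)`: atoms on the left, bodies on the right. -/
abbrev Dom (V : Type) := V ⊕ Body V

def atoms (Prog : Finset (Rule V)) : Finset V :=
  Prog.sup (fun r => insert r.head (r.pos ∪ r.neg))

def bodies (Prog : Finset (Rule V)) : Finset (Body V) :=
  Prog.image (fun r => (r.pos, r.neg))

/-- `body(p)`: the bodies of rules with head `p`. -/
def bodiesOf (Prog : Finset (Rule V)) (p : V) : Finset (Body V) :=
  (Prog.filter (fun r => r.head = p)).image (fun r => (r.pos, r.neg))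

/-- `Y` is closed under the Gelfond–Lifschitz reduct of `Prog` w.r.t. `X`. -/
def ReductClosed (Prog : Finset (Rule V)) (X Y : Set V) : Prop :=
  ∀ r ∈ Prog, ↑r.pos ⊆ Y → (∀ q ∈ r.neg, q ∉ X) → r.head ∈ Y

/-- `X` is an answer set of `Prog`: `X` is the least model of the reduct `Prog^X`. -/
def IsAnswerSet (Prog : Finset (Rule V)) (X : Set V) : Prop :=
  X = ⋂₀ {Y : Set V | ReductClosed Prog X Y}

/-- `Prog` is tight: its positive atom dependency graph is acyclic. -/
def Tight (Prog : Finset (Rule V)) : Prop :=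
  WellFounded (fun q p : V => ∃ r ∈ Prog, r.head = p ∧ q ∈ r.pos)

/-- Completion nogoods `Δ_β` for a body `β`. -/
def Dbody (β : Body V) : Set (Set (Lit (Dom V))) :=
  insert
    ((fun p => Lit.pos (Sum.inl p)) '' ↑β.1 ∪ (fun q => Lit.neg (Sum.inl q)) '' ↑β.2 ∪
      {Lit.neg (Sum.inr β)})
    ({δ | ∃ p ∈ β.1, δ = {Lit.neg (Sum.inl p), Lit.pos (Sum.inr β)}} ∪
     {δ | ∃ q ∈ β.2, δ = {Lit.pos (Sum.inl q), Lit.pos (Sum.inr β)}})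

/-- Completion nogoods `Δ_p` for an atom `p`. -/
def Datom (Prog : Finset (Rule V)) (p : V) : Set (Set (Lit (Dom V))) :=
  insert
    ((fun β => Lit.neg (Sum.inr β)) '' ↑(bodiesOf Prog p) ∪ {Lit.pos (Sum.inl p)})
    {δ | ∃ β ∈ bodiesOf Prog p, δ = {Lit.pos (Sum.inr β), Lit.neg (Sum.inl p)}}

/-- The completion nogoods `Δ_Prog`. -/
def DeltaPi (Prog : Finset (Rule V)) : Set (Set (Lit (Dom V))) :=
  (⋃ β ∈ bodies Prog, Dbody β) ∪ (⋃ p ∈ atoms Prog, Datom Prog p)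

/-- The domain `atom(Prog) ∪ body(Prog)` as a set. -/
def domPi (Prog : Finset (Rule V)) : Set (Dom V) :=
  (Sum.inl '' ↑(atoms Prog)) ∪ (Sum.inr '' ↑(bodies Prog))

def Tass (A : Set (Lit (Dom V))) : Set (Dom V) := {v | Lit.pos v ∈ A}
def Fass (A : Set (Lit (Dom V))) : Set (Dom V) := {v | Lit.neg v ∈ A}

/-- `A` is a total assignment over `dom(Prog) = atom(Prog) ∪ body(Prog)`. -/
def TotalAssign (Prog : Finset (Rule V)) (A : Set (Lit (Dom V))) : Prop :=
  (∀ l ∈ A, Lit.var l ∈ domPi Prog) ∧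
  Tass A ∪ Fass A = domPi Prog ∧ Tass A ∩ Fass A = ∅

/-- `A` is a solution for the set `Δ` of nogoods. -/
def IsSolution (Prog : Finset (Rule V)) (Δ : Set (Set (Lit (Dom V))))
    (A : Set (Lit (Dom V))) : Prop :=
  TotalAssign Prog A ∧ ∀ δ ∈ Δ, ¬ δ ⊆ A

/-- The external bodies `EB(U,Prog)` of a set `U` of atoms. -/
def EB (Prog : Finset (Rule V)) (U : Finset V) : Finset (Body V) :=
  (Prog.filter (fun r => r.head ∈ U ∧ r.pos ∩ U = ∅)).image (fun r => (r.pos, r.neg))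

/-- The loop nogoods `Λ_U` for a set `U` of atoms. -/
def LambdaU (Prog : Finset (Rule V)) (U : Finset V) : Set (Set (Lit (Dom V))) :=
  {δ | ∃ p ∈ U,
    δ = (fun β => Lit.neg (Sum.inr β)) '' ↑(EB Prog U) ∪ {Lit.pos (Sum.inl p)}}

/-- `Λ_Prog`: the loop nogoods of all subsets of `atom(Prog)`. -/
def LambdaPi (Prog : Finset (Rule V)) : Set (Set (Lit (Dom V))) :=
  ⋃ U ∈ (atoms Prog).powerset, LambdaU Prog U

/-- for a total assignment `A` solving the completion nogoods
`Δ_Prog`, the set `T_A ∩ atom(Prog)` is an answer set of `Prog` iff no nonempty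
subset `U` of `T_A ∩ atom(Prog)` is unfounded w.r.t. `A`, i.e., satisfies
`EB(U,Prog) ⊆ F_A`. -/
theorem stmt17 (Prog : Finset (Rule V)) (A : Set (Lit (Dom V)))
    (hA : IsSolution Prog (DeltaPi Prog) A) :
    IsAnswerSet Prog {p : V | p ∈ atoms Prog ∧ Lit.pos (Sum.inl p) ∈ A} ↔
      ∀ U : Finset V, U.Nonempty →
        (↑U ⊆ {p : V | p ∈ atoms Prog ∧ Lit.pos (Sum.inl p) ∈ A}) →
        ¬ (∀ β ∈ EB Prog U, Lit.neg (Sum.inr β) ∈ A) := by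
  classical
  obtain ⟨⟨hdomA, hcov, hdis⟩, hng⟩ := hA
  set X : Set V := {p : V | p ∈ atoms Prog ∧ Lit.pos (Sum.inl p) ∈ A} with hXdef
  -- consistency and totality
  have hcons : ∀ v : Dom V, ¬ (Lit.pos v ∈ A ∧ Lit.neg v ∈ A) := by
    intro v ⟨h1, h2⟩
    have hv : v ∈ Tass A ∩ Fass A := ⟨h1, h2⟩
    rw [hdis] at hv
    exact hv
  have htotal : ∀ v ∈ domPi Prog, Lit.pos v ∈ A ∨ Lit.neg v ∈ A := by
    intro v hv
    have : v ∈ Tass A ∪ Fass A := by rw [hcov]; exact hv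
    exact this
  -- domain membership
  have hatomdom : ∀ p ∈ atoms Prog, (Sum.inl p : Dom V) ∈ domPi Prog := by
    intro p hp; exact Or.inl ⟨p, by simpa using hp, rfl⟩
  have hbodydom : ∀ β ∈ bodies Prog, (Sum.inr β : Dom V) ∈ domPi Prog := by
    intro β hβ; exact Or.inr ⟨β, by simpa using hβ, rfl⟩
  -- atoms facts
  have hhead : ∀ r ∈ Prog, r.head ∈ atoms Prog := by
    intro r hr
    simp only [atoms, Finset.mem_sup]
    exact ⟨r, hr, Finset.mem_insert_self _ _⟩
  have hposatoms : ∀ r ∈ Prog, ∀ p ∈ r.pos, p ∈ atoms Prog := by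
    intro r hr p hp
    simp only [atoms, Finset.mem_sup]
    exact ⟨r, hr, Finset.mem_insert_of_mem (Finset.mem_union_left _ hp)⟩
  have hnegatoms : ∀ r ∈ Prog, ∀ q ∈ r.neg, q ∈ atoms Prog := by
    intro r hr q hq
    simp only [atoms, Finset.mem_sup]
    exact ⟨r, hr, Finset.mem_insert_of_mem (Finset.mem_union_right _ hq)⟩
  have hrbody : ∀ r ∈ Prog, ((r.pos, r.neg) : Body V) ∈ bodies Prog := by
    intro r hr; exact Finset.mem_image_of_mem _ hr
  -- body nogoods
  have hDb : ∀ β ∈ bodies Prog, ∀ δ ∈ Dbody β, ¬ δ ⊆ A := by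
    intro β hβ δ hδ
    apply hng
    exact Or.inl (Set.mem_biUnion (by simpa using hβ) hδ)
  have hDa : ∀ p ∈ atoms Prog, ∀ δ ∈ Datom Prog p, ¬ δ ⊆ A := by
    intro p hp δ hδ
    apply hng
    exact Or.inr (Set.mem_biUnion (by simpa using hp) hδ)
  -- body true → its literals hold
  have hBodyTrue : ∀ β ∈ bodies Prog, Lit.pos (Sum.inr β) ∈ A →
      (∀ p ∈ β.1, Lit.pos (Sum.inl p) ∈ A) ∧ (∀ q ∈ β.2, Lit.neg (Sum.inl q) ∈ A) := by
    intro β hβ hpos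
    obtain ⟨r, hr, hrβ⟩ := Finset.mem_image.1 hβ
    constructor
    · intro p hp
      have hδ : ({Lit.neg (Sum.inl p), Lit.pos (Sum.inr β)} : Set (Lit (Dom V))) ∈ Dbody β :=
        Set.mem_insert_of_mem _ (Or.inl ⟨p, hp, rfl⟩)
      have hns := hDb β hβ _ hδ
      have hnn : Lit.neg (Sum.inl p) ∉ A := by
        intro h
        exact hns (by intro l hl; rcases hl with rfl | hl; · exact h
                      · simp only [Set.mem_singleton_iff] at hl; subst hl; exact hpos)
      have hpa : p ∈ atoms Prog := hposatoms r hr p (by rw [← hrβ] at hp; exact hp)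
      rcases htotal _ (hatomdom p hpa) with h | h
      · exact h
      · exact absurd h hnn
    · intro q hq
      have hδ : ({Lit.pos (Sum.inl q), Lit.pos (Sum.inr β)} : Set (Lit (Dom V))) ∈ Dbody β :=
        Set.mem_insert_of_mem _ (Or.inr ⟨q, hq, rfl⟩)
      have hns := hDb β hβ _ hδ
      have hnp : Lit.pos (Sum.inl q) ∉ A := by
        intro h
        exact hns (by intro l hl; rcases hl with rfl | hl; · exact h
                      · simp only [Set.mem_singleton_iff] at hl; subst hl; exact hpos)
      have hqa : q ∈ atoms Prog := hnegatoms r hr q (by rw [← hrβ] at hq; exact hq)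
      rcases htotal _ (hatomdom q hqa) with h | h
      · exact absurd h hnp
      · exact h
  -- body literals hold → body true
  have hBodySat : ∀ β ∈ bodies Prog, (∀ p ∈ β.1, Lit.pos (Sum.inl p) ∈ A) →
      (∀ q ∈ β.2, Lit.neg (Sum.inl q) ∈ A) → Lit.pos (Sum.inr β) ∈ A := by
    intro β hβ h1 h2
    rcases htotal _ (hbodydom β hβ) with h | h
    · exact h
    · exfalso
      apply hDb β hβ _ (Set.mem_insert _ _)
      intro l hl
      rcases hl with (⟨p, hp, rfl⟩ | ⟨q, hq, rfl⟩) | hl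
      · exact h1 p hp
      · exact h2 q hq
      · simp only [Set.mem_singleton_iff] at hl; subst hl; exact h
  -- body true → head true
  have hHeadTrue : ∀ p ∈ atoms Prog, ∀ β ∈ bodiesOf Prog p,
      Lit.pos (Sum.inr β) ∈ A → Lit.pos (Sum.inl p) ∈ A := by
    intro p hp β hβ hpos
    have hδ : ({Lit.pos (Sum.inr β), Lit.neg (Sum.inl p)} : Set (Lit (Dom V)))
        ∈ Datom Prog p := Set.mem_insert_of_mem _ ⟨β, hβ, rfl⟩
    have hns := hDa p hp _ hδ
    have hnn : Lit.neg (Sum.inl p) ∉ A := by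
      intro h
      exact hns (by intro l hl; rcases hl with rfl | hl; · exact hpos
                    · simp only [Set.mem_singleton_iff] at hl; subst hl; exact h)
    rcases htotal _ (hatomdom p hp) with h | h
    · exact h
    · exact absurd h hnn
  -- a false atom outside X (given it is an atom)
  have hfalse : ∀ q ∈ atoms Prog, q ∉ X → Lit.neg (Sum.inl q) ∈ A := by
    intro q hq hqX
    rcases htotal _ (hatomdom q hq) with h | h
    · exact absurd ⟨hq, h⟩ hqX
    · exact h
  -- X is closed under the reduct
  have hXclosed : ReductClosed Prog X X := by
    intro r hr hpos hneg
    have hβ := hrbody r hr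
    have hbt : Lit.pos (Sum.inr ((r.pos, r.neg) : Body V)) ∈ A := by
      apply hBodySat _ hβ
      · intro p hp; exact (hpos hp).2
      · intro q hq
        exact hfalse q (hnegatoms r hr q hq) (hneg q hq)
    have hmem : ((r.pos, r.neg) : Body V) ∈ bodiesOf Prog r.head := by
      simp only [bodiesOf, Finset.mem_image, Finset.mem_filter]
      exact ⟨r, ⟨hr, rfl⟩, rfl⟩
    exact ⟨hhead r hr, hHeadTrue r.head (hhead r hr) _ hmem hbt⟩
  -- the intersection of closed sets is closed
  have hInterClosed : ReductClosed Prog X (⋂₀ {Y : Set V | ReductClosed Prog X Y}) := by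
    intro r hr hpos hneg
    apply Set.mem_sInter.2
    intro Y hY
    exact hY r hr (fun p hp => Set.mem_sInter.1 (hpos hp) Y hY) hneg
  constructor
  · -- answer set → no nonempty unfounded subset
    intro hAS U hUne hUX hUF
    have hYclosed : ReductClosed Prog X (X \ ↑U) := by
      intro r hr hpos hneg
      have hposX : ↑r.pos ⊆ X := fun p hp => (hpos hp).1
      have hheadX : r.head ∈ X := hXclosed r hr hposX hneg
      refine ⟨hheadX, fun hhU => ?_⟩
      have hβEB : ((r.pos, r.neg) : Body V) ∈ EB Prog U := by
        simp only [EB, Finset.mem_image, Finset.mem_filter]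
        refine ⟨r, ⟨hr, by simpa using hhU, ?_⟩, rfl⟩
        apply Finset.eq_empty_iff_forall_notMem.2
        intro p hp
        rcases Finset.mem_inter.1 hp with ⟨hp1, hp2⟩
        exact (hpos hp1).2 hp2
      have hneg' : Lit.neg (Sum.inr ((r.pos, r.neg) : Body V)) ∈ A := hUF _ hβEB
      have hbt : Lit.pos (Sum.inr ((r.pos, r.neg) : Body V)) ∈ A := by
        apply hBodySat _ (hrbody r hr)
        · intro p hp; exact (hpos hp).1.2
        · intro q hq; exact hfalse q (hnegatoms r hr q hq) (hneg q hq)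
      exact hcons _ ⟨hbt, hneg'⟩
    obtain ⟨u, hu⟩ := hUne
    have huX : u ∈ X := hUX hu
    have hu2 : u ∈ ⋂₀ {Y : Set V | ReductClosed Prog X Y} := by
      rw [IsAnswerSet] at hAS
      rw [← hAS]
      exact huX
    exact (Set.sInter_subset_of_mem hYclosed hu2).2 (by simpa using hu)
  · -- no nonempty unfounded subset → answer set
    intro h
    have hfin : (X \ ⋂₀ {Y : Set V | ReductClosed Prog X Y}).Finite :=
      Set.Finite.subset (atoms Prog).finite_toSet
        (fun p hp => by simpa using hp.1.1)
    set U : Finset V := hfin.toFinset with hUdef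
    have hUempty : U = ∅ := by
      by_contra hUne
      have hne : U.Nonempty := Finset.nonempty_iff_ne_empty.2 hUne
      have hUX : ↑U ⊆ X := by
        intro p hp
        rw [hUdef] at hp
        exact (hfin.mem_toFinset.1 (by simpa using hp)).1
      have := h U hne hUX
      push_neg at this
      obtain ⟨β, hβEB, hβA⟩ := this
      simp only [EB, Finset.mem_image, Finset.mem_filter] at hβEB
      obtain ⟨r, ⟨hr, hhU, hdisU⟩, hrβ⟩ := hβEB
      subst hrβ
      have hβb : ((r.pos, r.neg) : Body V) ∈ bodies Prog := hrbody r hr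
      have hβpos : Lit.pos (Sum.inr ((r.pos, r.neg) : Body V)) ∈ A := by
        rcases htotal _ (hbodydom _ hβb) with h' | h'
        · exact h'
        · exact absurd h' hβA
      obtain ⟨hb1, hb2⟩ := hBodyTrue _ hβb hβpos
      have hposY : ↑r.pos ⊆ ⋂₀ {Y : Set V | ReductClosed Prog X Y} := by
        intro p hp
        have hpA : Lit.pos (Sum.inl p) ∈ A := hb1 p hp
        have hpX : p ∈ X := ⟨hposatoms r hr p hp, hpA⟩
        have hpU : p ∉ U := by
          intro hpU
          exact Finset.eq_empty_iff_forall_notMem.1 hdisU p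
            (Finset.mem_inter.2 ⟨hp, hpU⟩)
        by_contra hpY
        exact hpU (hfin.mem_toFinset.2 ⟨hpX, hpY⟩)
      have hnegX : ∀ q ∈ r.neg, q ∉ X := by
        intro q hq hqX
        have hqA : Lit.neg (Sum.inl q) ∈ A := hb2 q hq
        exact hcons _ ⟨hqX.2, hqA⟩
      have hheadY : r.head ∈ ⋂₀ {Y : Set V | ReductClosed Prog X Y} :=
        hInterClosed r hr hposY hnegX
      have hheadU : r.head ∈ U := hhU
      have := hfin.mem_toFinset.1 hheadU
      exact this.2 hheadY
    rw [IsAnswerSet]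
    apply Set.Subset.antisymm
    · intro p hpX
      by_contra hpY
      have : p ∈ U := hfin.mem_toFinset.2 ⟨hpX, hpY⟩
      rw [hUempty] at this
      exact absurd this (Finset.notMem_empty p)
    · exact Set.sInter_subset_of_mem hXclosed
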